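/- For σ > 0, γ > 0, the fourth moment of the Dual Voigt(γ, σ²) distribution is ∫_ℝ u⁴ p'(u) du = γ⁴/σ⁸ + 6γ²/σ⁶ + 3/σ⁴ − (5γ/σ⁵ + γ³/σ⁷) · φ(γ/σ)/(1 − Φ(γ/σ)), where φ and Φ are the standard normal density and cumulative distribution function. -/

import Mathlib

open MeasureTheory ProbabilityTheory Real

/-- The standard normal density. -/
noncomputable def stdNormalPDF (t : ℝ) : ℝ := 1 / Real.sqrt (2 * π) * Real.exp (-t ^ 2 / 2)

/-- The standard normal cumulative distribution function. -/
noncomputable def stdNormalCDF (t : ℝ) : ℝ := ∫ s in Set.Iic t, stdNormalPDF s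

/-- The Dual Voigt(γ, σ²) density. -/
noncomputable def dualVoigtDensity (σ γ : ℝ) (u : ℝ) : ℝ :=
  1 / (2 * (1 - stdNormalCDF (γ / σ))) * (σ / Real.sqrt (2 * π)) *
    Real.exp (-γ ^ 2 / (2 * σ ^ 2)) * Real.exp (-γ * |u| - σ ^ 2 * u ^ 2 / 2)

/-! The density is even, so the moment is twice the half-line integral
`J k = ∫₀^∞ u^k e^{-γu - σ²u²/2} du`. Integrating `(u^k e^{-γu - σ²u²/2})'` over `(0, ∞)` gives
`σ² J (k+1) = k J (k-1) - γ J k + 0^k`, which expresses `J 4` through `J 0`; completing the square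
turns `J 0` into a Gaussian tail, `e^{γ²/(2σ²)} √(2π) (1 - Φ(γ/σ)) / σ`. The Gaussian bound
`e^{-γu - σ²u²/2} ≤ e^{γ²/σ²} e^{-σ²u²/4}` supplies integrability and decay. -/

open Set Filter Topology Asymptotics

lemma integrable_stdNormalPDF : Integrable stdNormalPDF := by
  have h := (integrable_exp_neg_mul_sq (b := 1 / 2) (by norm_num)).const_mul (1 / √(2 * π))
  refine h.congr (ae_of_all _ fun t => ?_)
  simp only [stdNormalPDF]
  ring_nf

lemma integral_stdNormalPDF : ∫ t, stdNormalPDF t = 1 := by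
  have h : ∫ t, stdNormalPDF t = 1 / √(2 * π) * ∫ t : ℝ, exp (-(1 / 2) * t ^ 2) := by
    rw [← integral_const_mul]
    congr 1 with t
    simp only [stdNormalPDF]
    ring_nf
  rw [h, integral_gaussian]
  have : (0 : ℝ) < √(2 * π) := by positivity
  field_simp

lemma integral_Ioi_stdNormalPDF (a : ℝ) : ∫ t in Ioi a, stdNormalPDF t = 1 - stdNormalCDF a := by
  rw [← integral_stdNormalPDF, ← intervalIntegral.integral_Iic_add_Ioi
    integrable_stdNormalPDF.integrableOn integrable_stdNormalPDF.integrableOn, stdNormalCDF]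
  ring

lemma stdNormalPDF_pos (t : ℝ) : 0 < stdNormalPDF t := by
  unfold stdNormalPDF
  positivity

lemma one_sub_stdNormalCDF_pos (a : ℝ) : 0 < 1 - stdNormalCDF a := by
  rw [← integral_Ioi_stdNormalPDF, setIntegral_pos_iff_support_of_nonneg_ae
    (ae_of_all _ fun t => (stdNormalPDF_pos t).le) integrable_stdNormalPDF.integrableOn,
    Function.support_eq_univ fun t => (stdNormalPDF_pos t).ne']
  simp

lemma setIntegral_Ioi_comp_add_right {E : Type*} [NormedAddCommGroup E] [NormedSpace ℝ E]
    (f : ℝ → E) (a c : ℝ) : ∫ x in Ioi a, f (x + c) = ∫ x in Ioi (a + c), f x := by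
  have h := (measurePreserving_add_right volume c).setIntegral_preimage_emb
    (measurableEmbedding_addRight c) f (Ioi (a + c))
  simpa using h

noncomputable def dualVoigtHalfMoment (σ γ : ℝ) (k : ℕ) : ℝ :=
  ∫ u in Ioi 0, u ^ k * exp (-γ * u - σ ^ 2 * u ^ 2 / 2)

section HalfMoment

variable {σ : ℝ} (γ : ℝ)

lemma exp_neg_mul_sub_sq_le (hσ : σ ≠ 0) (u : ℝ) :
    exp (-γ * u - σ ^ 2 * u ^ 2 / 2) ≤ exp (γ ^ 2 / σ ^ 2) * exp (-(σ ^ 2 / 4) * u ^ 2) := by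
  rw [← exp_add, exp_le_exp]
  have h : 0 ≤ (γ / σ + σ * u / 2) ^ 2 := sq_nonneg _
  have h' : (γ / σ + σ * u / 2) ^ 2 = γ ^ 2 / σ ^ 2 + γ * u + σ ^ 2 * u ^ 2 / 4 := by
    field_simp
    ring
  linarith

lemma norm_pow_mul_exp_neg_mul_sub_sq_le (hσ : σ ≠ 0) (k : ℕ) (u : ℝ) :
    ‖u ^ k * exp (-γ * u - σ ^ 2 * u ^ 2 / 2)‖ ≤
      exp (γ ^ 2 / σ ^ 2) * ‖u ^ (k : ℝ) * exp (-(σ ^ 2 / 4) * u ^ 2)‖ := by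
  simp only [rpow_natCast, norm_mul, norm_eq_abs, abs_exp, abs_pow]
  rw [mul_left_comm]
  gcongr
  exact exp_neg_mul_sub_sq_le γ hσ u

lemma integrable_pow_mul_exp_neg_mul_sub_sq (hσ : σ ≠ 0) (k : ℕ) :
    Integrable fun u => u ^ k * exp (-γ * u - σ ^ 2 * u ^ 2 / 2) := by
  have hg := (integrable_rpow_mul_exp_neg_mul_sq (b := σ ^ 2 / 4) (by positivity) (s := k)
    (neg_one_lt_zero.trans_le k.cast_nonneg)).norm.const_mul (exp (γ ^ 2 / σ ^ 2))
  exact hg.mono' (by fun_prop) (ae_of_all _ (norm_pow_mul_exp_neg_mul_sub_sq_le γ hσ k))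

lemma tendsto_pow_mul_exp_neg_mul_sub_sq_atTop (hσ : σ ≠ 0) (k : ℕ) :
    Tendsto (fun u => u ^ k * exp (-γ * u - σ ^ 2 * u ^ 2 / 2)) atTop (𝓝 0) := by
  have hO := IsBigO.of_bound (l := atTop) _
    (Eventually.of_forall (norm_pow_mul_exp_neg_mul_sub_sq_le γ hσ k))
  refine hO.trans_isLittleO (rpow_mul_exp_neg_mul_sq_isLittleO_exp_neg (by positivity) _)
    |>.trans_tendsto ?_
  exact tendsto_exp_atBot.comp (tendsto_id.const_mul_atTop_of_neg (by norm_num))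

lemma hasDerivAt_pow_mul_exp_neg_mul_sub_sq (k : ℕ) (u : ℝ) :
    HasDerivAt (fun u => u ^ k * exp (-γ * u - σ ^ 2 * u ^ 2 / 2))
      ((k * u ^ (k - 1) - (γ + σ ^ 2 * u) * u ^ k) * exp (-γ * u - σ ^ 2 * u ^ 2 / 2)) u := by
  have hq : HasDerivAt (fun u => -γ * u - σ ^ 2 * u ^ 2 / 2) (-(γ + σ ^ 2 * u)) u :=
    (((hasDerivAt_id' u).const_mul (-γ)).sub
      (((hasDerivAt_pow 2 u).const_mul (σ ^ 2)).div_const 2)).congr_deriv (by push_cast; ring)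
  exact ((hasDerivAt_pow k u).mul hq.exp).congr_deriv (by ring)

/-- At `k = 0` the truncated `k - 1` is harmless: its coefficient `k` vanishes. -/
lemma sq_mul_dualVoigtHalfMoment_succ (hσ : σ ≠ 0) (k : ℕ) :
    σ ^ 2 * dualVoigtHalfMoment σ γ (k + 1) =
      k * dualVoigtHalfMoment σ γ (k - 1) - γ * dualVoigtHalfMoment σ γ k + 0 ^ k := by
  have hinteg (j : ℕ) (c : ℝ) :
      IntegrableOn (fun u => c * (u ^ j * exp (-γ * u - σ ^ 2 * u ^ 2 / 2))) (Ioi 0) :=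
    (integrable_pow_mul_exp_neg_mul_sub_sq γ hσ j).integrableOn.const_mul c
  have hftc := integral_Ioi_of_hasDerivAt_of_tendsto' (a := 0) (f' := fun u =>
      k * (u ^ (k - 1) * exp (-γ * u - σ ^ 2 * u ^ 2 / 2)) -
        γ * (u ^ k * exp (-γ * u - σ ^ 2 * u ^ 2 / 2)) -
        σ ^ 2 * (u ^ (k + 1) * exp (-γ * u - σ ^ 2 * u ^ 2 / 2)))
    (fun u _ => (hasDerivAt_pow_mul_exp_neg_mul_sub_sq γ k u).congr_deriv (by ring))
    (((hinteg _ _).sub' (hinteg _ _)).sub' (hinteg _ _))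
    (tendsto_pow_mul_exp_neg_mul_sub_sq_atTop γ hσ k)
  rw [integral_sub ((hinteg _ _).sub' (hinteg _ _)) (hinteg _ _),
    integral_sub (hinteg _ _) (hinteg _ _), integral_const_mul, integral_const_mul,
    integral_const_mul] at hftc
  have hexp0 : exp (-γ * 0 - σ ^ 2 * 0 ^ 2 / 2) = 1 := by simp
  rw [hexp0] at hftc
  simp only [dualVoigtHalfMoment]
  linarith

lemma exp_neg_mul_sub_sq_eq (hσ : σ ≠ 0) (u : ℝ) :
    exp (-γ * u - σ ^ 2 * u ^ 2 / 2) =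
      exp (γ ^ 2 / (2 * σ ^ 2)) * √(2 * π) * stdNormalPDF (σ * u + γ / σ) := by
  have hs : √(2 * π) ≠ 0 := by positivity
  rw [stdNormalPDF, mul_assoc, ← mul_assoc √(2 * π), mul_one_div_cancel hs, one_mul, ← exp_add]
  congr 1
  field_simp
  ring

lemma dualVoigtHalfMoment_zero (hσ : 0 < σ) :
    dualVoigtHalfMoment σ γ 0 =
      exp (γ ^ 2 / (2 * σ ^ 2)) * √(2 * π) / σ * (1 - stdNormalCDF (γ / σ)) := by
  simp only [dualVoigtHalfMoment, pow_zero, one_mul, exp_neg_mul_sub_sq_eq γ hσ.ne']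
  rw [integral_const_mul, integral_comp_mul_left_Ioi (fun t => stdNormalPDF (t + γ / σ)) 0 hσ,
    setIntegral_Ioi_comp_add_right, mul_zero, zero_add, integral_Ioi_stdNormalPDF, smul_eq_mul]
  ring

lemma dualVoigtHalfMoment_four (hσ : σ ≠ 0) :
    dualVoigtHalfMoment σ γ 4 =
      (γ ^ 4 + 6 * γ ^ 2 * σ ^ 2 + 3 * σ ^ 4) / σ ^ 8 * dualVoigtHalfMoment σ γ 0 -
        (5 * γ * σ ^ 2 + γ ^ 3) / σ ^ 8 := by
  have h0 := sq_mul_dualVoigtHalfMoment_succ γ hσ 0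
  have h1 := sq_mul_dualVoigtHalfMoment_succ γ hσ 1
  have h2 := sq_mul_dualVoigtHalfMoment_succ γ hσ 2
  have h3 := sq_mul_dualVoigtHalfMoment_succ γ hσ 3
  norm_num at h0 h1 h2 h3
  field_simp
  linear_combination σ ^ 6 * h3 - γ * σ ^ 4 * h2 + (3 * σ ^ 4 + γ ^ 2 * σ ^ 2) * h1 -
    (5 * γ * σ ^ 2 + γ ^ 3) * h0

end HalfMoment

lemma integral_pow_mul_dualVoigtDensity (σ γ : ℝ) {k : ℕ} (hk : Even k) :
    ∫ u, u ^ k * dualVoigtDensity σ γ u =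
      σ * exp (-γ ^ 2 / (2 * σ ^ 2)) / (√(2 * π) * (1 - stdNormalCDF (γ / σ))) *
        dualVoigtHalfMoment σ γ k := by
  set C := 1 / (2 * (1 - stdNormalCDF (γ / σ))) * (σ / √(2 * π)) * exp (-γ ^ 2 / (2 * σ ^ 2))
    with hC
  calc ∫ u, u ^ k * dualVoigtDensity σ γ u
      = ∫ u, C * (|u| ^ k * exp (-γ * |u| - σ ^ 2 * |u| ^ 2 / 2)) := by
        congr with u
        simp only [dualVoigtDensity, hk.pow_abs, sq_abs, C]
        ring
    _ = 2 * ∫ x in Ioi 0, C * (x ^ k * exp (-γ * x - σ ^ 2 * x ^ 2 / 2)) :=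
        integral_comp_abs (f := fun x => C * (x ^ k * exp (-γ * x - σ ^ 2 * x ^ 2 / 2)))
    _ = _ := by
        rw [integral_const_mul, dualVoigtHalfMoment, hC]
        generalize 1 - stdNormalCDF (γ / σ) = A
        ring

theorem dualVoigt_fourth_moment_general (σ γ : ℝ) (hσ : 0 < σ) :
    (∫ u : ℝ, u ^ 4 * dualVoigtDensity σ γ u) =
      γ ^ 4 / σ ^ 8 + 6 * γ ^ 2 / σ ^ 6 + 3 / σ ^ 4 -
        (5 * γ / σ ^ 5 + γ ^ 3 / σ ^ 7) *
          (stdNormalPDF (γ / σ) / (1 - stdNormalCDF (γ / σ))) := by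
  have hA := (one_sub_stdNormalCDF_pos (γ / σ)).ne'
  have hs : √(2 * π) ≠ 0 := by positivity
  have hE : exp (γ ^ 2 / (2 * σ ^ 2)) = (exp (-γ ^ 2 / (2 * σ ^ 2)))⁻¹ := by
    rw [← exp_neg, neg_div, neg_neg]
  have hφ : -(γ / σ) ^ 2 / 2 = -γ ^ 2 / (2 * σ ^ 2) := by
    field_simp
  rw [integral_pow_mul_dualVoigtDensity σ γ (by decide), dualVoigtHalfMoment_four γ hσ.ne',
    dualVoigtHalfMoment_zero γ hσ, stdNormalPDF, hφ, hE]
  field_simp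

/-- the fourth moment of the Dual Voigt(γ, σ²)
distribution is γ⁴/σ⁸ + 6γ²/σ⁶ + 3/σ⁴ − (5γ/σ⁵ + γ³/σ⁷)·φ(γ/σ)/(1 − Φ(γ/σ)). -/
theorem dualVoigt_fourth_moment (σ γ : ℝ) (hσ : 0 < σ) (hγ : 0 < γ) :
    (∫ u : ℝ, u ^ 4 * dualVoigtDensity σ γ u) =
      γ ^ 4 / σ ^ 8 + 6 * γ ^ 2 / σ ^ 6 + 3 / σ ^ 4 -
        (5 * γ / σ ^ 5 + γ ^ 3 / σ ^ 7) *
          (stdNormalPDF (γ / σ) / (1 - stdNormalCDF (γ / σ))) :=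
  dualVoigt_fourth_moment_general σ γ hσ
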